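/- The open-required directed door can simulate any gadget: for every gadget G with finite state set S, finite location set P, and traversal set T(G), there exists a system of open-required directed doors (one door D_{s,p} for each state–location pair, one door D_p for each location, and one door for each traversal of G, wired as in the construction) with external locations in bijection with P, and an injective map sending each state s of G to the global state in which exactly the doors D_{s,p} (p ∈ P) are open, such that a traversal between external locations is possible in the system if and only if the corresponding traversal is allowed in the transitive closure of G. -/

import Mathlib

/-- A 1-player gadget: a finite set of states, a finite set of locations,
and a set of traversals between state–location pairs. -/
structure Gadget where
  State : Type
  Loc : Type
  stateFin : Fintype State
  locFin : Fintype Loc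
  trav : (State × Loc) → (State × Loc) → Prop

open Classical in
/-- Update the state of one gadget instance in a global state. -/
noncomputable def updState {ι St : Type} (σg : ι → St) (i : ι) (s : St) : ι → St :=
  fun j => if j = i then s else σg j

/-- A system of copies of the gadget `G`: a finite collection of instances together with
symmetric connections (pairings of locations) along which the agent moves freely. -/
structure System (G : Gadget) where
  ι : Type
  instFin : Fintype ι
  conn : (ι × G.Loc) → (ι × G.Loc) → Prop
  conn_symm : ∀ x y, conn x y → conn y x

/-- A single move of the agent in a system: a traversal inside one instance
(changing only that instance's state), or a free move along a connection. -/
inductive SysStep (G : Gadget) (S : System G) :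
    ((S.ι → G.State) × (S.ι × G.Loc)) → ((S.ι → G.State) × (S.ι × G.Loc)) → Prop
  | trav {σg : S.ι → G.State} {i : S.ι} {a b : G.Loc} {s' : G.State} :
      G.trav (σg i, a) (s', b) →
      SysStep G S (σg, (i, a)) (updState σg i s', (i, b))
  | move {σg : S.ι → G.State} {x y : S.ι × G.Loc} :
      S.conn x y → SysStep G S (σg, x) (σg, y)

/-- `Simulates G' G` : there is a system of copies of `G'`, with external locations
identified (injectively) with the locations of `G` and an injective encoding of the
states of `G` as global states, whose reachability behavior between external locations
in encoded global states is exactly the transitive closure of `G`. -/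
def Simulates (G' G : Gadget) : Prop :=
  ∃ S : System G', ∃ ext : G.Loc → S.ι × G'.Loc, ∃ enc : G.State → (S.ι → G'.State),
    Function.Injective ext ∧ Function.Injective enc ∧
    ∀ s s' a b,
      Relation.ReflTransGen (SysStep G' S) (enc s, ext a) (enc s', ext b) ↔
      Relation.ReflTransGen G.trav (s, a) (s', b)

/-! ### Doors.  State `true` = open, `false` = closed.
A direction flag `true` means the corresponding tunnel is directed,
`false` that it is undirected. -/

/-- Locations of a door with an opening tunnel: entrance/exit of the opening (`O`),
traverse (`T`) and closing (`C`) tunnels. -/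
inductive DoorLoc | O0 | O1 | T0 | T1 | C0 | C1
deriving DecidableEq

instance : Fintype DoorLoc :=
  ⟨{DoorLoc.O0, DoorLoc.O1, DoorLoc.T0, DoorLoc.T1, DoorLoc.C0, DoorLoc.C1}, fun x => by cases x <;> decide⟩

/-- Traversals of a door with an opening tunnel; `dO`, `dT`, `dC` record whether the
opening, traverse, closing tunnels are directed. -/
def doorTrav (dO dT dC : Bool) : (Bool × DoorLoc) → (Bool × DoorLoc) → Prop := fun x y =>
  (x.2 = DoorLoc.O0 ∧ y = (true, DoorLoc.O1)) ∨
  (dO = false ∧ x.2 = DoorLoc.O1 ∧ y = (true, DoorLoc.O0)) ∨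
  (x.1 = true ∧ x.2 = DoorLoc.T0 ∧ y = (true, DoorLoc.T1)) ∨
  (dT = false ∧ x.1 = true ∧ x.2 = DoorLoc.T1 ∧ y = (true, DoorLoc.T0)) ∨
  (x.2 = DoorLoc.C0 ∧ y = (false, DoorLoc.C1)) ∨
  (dC = false ∧ x.2 = DoorLoc.C1 ∧ y = (false, DoorLoc.C0))

/-- The door with an opening tunnel (an open-required door). -/
def doorGadget (dO dT dC : Bool) : Gadget :=
  ⟨Bool, DoorLoc, inferInstance, inferInstance, doorTrav dO dT dC⟩

/-- Locations of an open-optional door: opening port `O` plus traverse and closing tunnels. -/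
inductive ODoorLoc | O | T0 | T1 | C0 | C1
deriving DecidableEq

instance : Fintype ODoorLoc :=
  ⟨{ODoorLoc.O, ODoorLoc.T0, ODoorLoc.T1, ODoorLoc.C0, ODoorLoc.C1}, fun x => by cases x <;> decide⟩

/-- Traversals of an open-optional door: a visit to the opening port `O` sets the state
to open; `dT`, `dC` record whether the traverse and closing tunnels are directed. -/
def openOptDoorTrav (dT dC : Bool) : (Bool × ODoorLoc) → (Bool × ODoorLoc) → Prop := fun x y =>
  (x.2 = ODoorLoc.O ∧ y = (true, ODoorLoc.O)) ∨
  (x.1 = true ∧ x.2 = ODoorLoc.T0 ∧ y = (true, ODoorLoc.T1)) ∨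
  (dT = false ∧ x.1 = true ∧ x.2 = ODoorLoc.T1 ∧ y = (true, ODoorLoc.T0)) ∨
  (x.2 = ODoorLoc.C0 ∧ y = (false, ODoorLoc.C1)) ∨
  (dC = false ∧ x.2 = ODoorLoc.C1 ∧ y = (false, ODoorLoc.C0))

/-- The open-optional door. -/
def openOptDoorGadget (dT dC : Bool) : Gadget :=
  ⟨Bool, ODoorLoc, inferInstance, inferInstance, openOptDoorTrav dT dC⟩

/-- A diode: a 1-state gadget with one always-traversable directed tunnel. -/
inductive DiodeLoc | inp | out
deriving DecidableEq

instance : Fintype DiodeLoc :=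
  ⟨{DiodeLoc.inp, DiodeLoc.out}, fun x => by cases x <;> decide⟩

def diode : Gadget :=
  ⟨Unit, DiodeLoc, inferInstance, inferInstance,
    fun x y => x.2 = DiodeLoc.inp ∧ y.2 = DiodeLoc.out⟩

/-- Locations of an open-required normal self-closing door. -/
inductive SCDLoc | O0 | O1 | T0 | T1
deriving DecidableEq

instance : Fintype SCDLoc :=
  ⟨{SCDLoc.O0, SCDLoc.O1, SCDLoc.T0, SCDLoc.T1}, fun x => by cases x <;> decide⟩

/-- Open-required normal self-closing door: opening tunnel `O` (always traversable, sets
the state to open), self-closing tunnel `T` (traversable exactly when open, sets closed). -/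
def nSCDTrav (dO dT : Bool) : (Bool × SCDLoc) → (Bool × SCDLoc) → Prop := fun x y =>
  (x.2 = SCDLoc.O0 ∧ y = (true, SCDLoc.O1)) ∨
  (dO = false ∧ x.2 = SCDLoc.O1 ∧ y = (true, SCDLoc.O0)) ∨
  (x.1 = true ∧ x.2 = SCDLoc.T0 ∧ y = (false, SCDLoc.T1)) ∨
  (dT = false ∧ x.1 = true ∧ x.2 = SCDLoc.T1 ∧ y = (false, SCDLoc.T0))

def nSCD (dO dT : Bool) : Gadget :=
  ⟨Bool, SCDLoc, inferInstance, inferInstance, nSCDTrav dO dT⟩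

/-- Locations of an open-optional normal self-closing door. -/
inductive OOSCDLoc | O | T0 | T1
deriving DecidableEq

instance : Fintype OOSCDLoc :=
  ⟨{OOSCDLoc.O, OOSCDLoc.T0, OOSCDLoc.T1}, fun x => by cases x <;> decide⟩

/-- Open-optional normal self-closing door: opening port `O` (visit sets the state to
open), self-closing tunnel `T` (traversable exactly when open, sets the state closed). -/
def ooSCDTrav (dT : Bool) : (Bool × OOSCDLoc) → (Bool × OOSCDLoc) → Prop := fun x y =>
  (x.2 = OOSCDLoc.O ∧ y = (true, OOSCDLoc.O)) ∨
  (x.1 = true ∧ x.2 = OOSCDLoc.T0 ∧ y = (false, OOSCDLoc.T1)) ∨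
  (dT = false ∧ x.1 = true ∧ x.2 = OOSCDLoc.T1 ∧ y = (false, OOSCDLoc.T0))

def ooSCD (dT : Bool) : Gadget :=
  ⟨Bool, OOSCDLoc, inferInstance, inferInstance, ooSCDTrav dT⟩

/-- Locations of a symmetric self-closing door. -/
inductive SymSCDLoc | A0 | A1 | B0 | B1
deriving DecidableEq

instance : Fintype SymSCDLoc :=
  ⟨{SymSCDLoc.A0, SymSCDLoc.A1, SymSCDLoc.B0, SymSCDLoc.B1}, fun x => by cases x <;> decide⟩

/-- Symmetric self-closing door: self-opening tunnel `A` (traversable exactly when closed,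
sets the state open), self-closing tunnel `B` (traversable exactly when open, sets closed). -/
def symSCDTrav (dA dB : Bool) : (Bool × SymSCDLoc) → (Bool × SymSCDLoc) → Prop := fun x y =>
  (x.1 = false ∧ x.2 = SymSCDLoc.A0 ∧ y = (true, SymSCDLoc.A1)) ∨
  (dA = false ∧ x.1 = false ∧ x.2 = SymSCDLoc.A1 ∧ y = (true, SymSCDLoc.A0)) ∨
  (x.1 = true ∧ x.2 = SymSCDLoc.B0 ∧ y = (false, SymSCDLoc.B1)) ∨
  (dB = false ∧ x.1 = true ∧ x.2 = SymSCDLoc.B1 ∧ y = (false, SymSCDLoc.B0))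

def symSCD (dA dB : Bool) : Gadget :=
  ⟨Bool, SymSCDLoc, inferInstance, inferInstance, symSCDTrav dA dB⟩

/-!
The state of `G` is stored in a family of doors, one per state, exactly one of them open.
A traversal `t` from `(z, p)` to `(z', q)` is simulated by a route that starts at the hub of
`p`: it opens two guard doors of `t`, passes through the door of `z` (so `z` must be the current
state) and closes it, passes and closes the first guard, opens the door of `z'`, passes and closes
the second guard and ends at the hub of `q`. The doors of states are shared by all traversals, but
right after each of them the agent must pass a guard, and the only open guards are those of `t`:
an agent that set out along `t` cannot finish along another traversal. Hence, starting from an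
encoded state, every reachable configuration lies on such a route (`Admissible`), and the only
ones at hubs are encoded states reachable in `G`.
-/

namespace DirectedDoor

open DoorLoc Relation

attribute [local instance] Gadget.stateFin Gadget.locFin

section DoorSystem

variable {ι : Type}

open Classical in
theorem updState_eq_update {St : Type} (σ : ι → St) (i : ι) (b : St) :
    updState σ i b = Function.update σ i b := by
  funext j
  simp [updState, Function.update_apply]

theorem updState_of_eq {St : Type} {σ : ι → St} {i : ι} {b : St} (h : σ i = b) :
    updState σ i b = σ := by
  classical
  rw [updState_eq_update, ← h, Function.update_eq_self]

def doorSystem [Fintype ι] (W : ι × DoorLoc → ι × DoorLoc → Prop) :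
    System (doorGadget true true true) where
  ι := ι
  instFin := ‹_›
  conn x y := W x y ∨ W y x
  conn_symm _ _ := Or.symm

inductive DoorMove (W : ι × DoorLoc → ι × DoorLoc → Prop) :
    (ι → Bool) × (ι × DoorLoc) → (ι → Bool) × (ι × DoorLoc) → Prop
  | opening (σ : ι → Bool) (i : ι) : DoorMove W (σ, (i, O0)) (updState σ i true, (i, O1))
  | traverse {σ : ι → Bool} {i : ι} (h : σ i = true) : DoorMove W (σ, (i, T0)) (σ, (i, T1))
  | closing (σ : ι → Bool) (i : ι) : DoorMove W (σ, (i, C0)) (updState σ i false, (i, C1))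
  | forward {σ : ι → Bool} {x y : ι × DoorLoc} (h : W x y) : DoorMove W (σ, x) (σ, y)
  | backward {σ : ι → Bool} {x y : ι × DoorLoc} (h : W y x) : DoorMove W (σ, x) (σ, y)

theorem sysStep_doorSystem [Fintype ι] (W : ι × DoorLoc → ι × DoorLoc → Prop) :
    SysStep _ (doorSystem W) = DoorMove W := by
  ext c c'
  constructor
  · rintro (@⟨σ, i, a, b, s', h⟩ | ⟨h | h⟩)
    · simp only [doorGadget, doorTrav] at h
      rcases h with ⟨rfl, rfl, rfl⟩ | ⟨⟨⟩, -⟩ | ⟨h, rfl, rfl, rfl⟩ | ⟨⟨⟩, -⟩ | ⟨rfl, rfl, rfl⟩ | ⟨⟨⟩, -⟩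
      · exact .opening σ i
      · exact (updState_of_eq h).symm ▸ .traverse h
      · exact .closing σ i
    · exact .forward h
    · exact .backward h
  · rintro (⟨σ, i⟩ | @⟨σ, i, h⟩ | ⟨σ, i⟩ | ⟨h⟩ | ⟨h⟩)
    · exact .trav (Or.inl ⟨rfl, rfl⟩)
    · have step := SysStep.trav (S := doorSystem W) (σg := σ) (s' := true) (b := T1)
        (Or.inr (Or.inr (Or.inl ⟨h, rfl, rfl⟩)))
      erw [updState_of_eq h] at step
      exact step
    · exact .trav (Or.inr (Or.inr (Or.inr (Or.inr (Or.inl ⟨rfl, rfl⟩)))))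
    · exact .move (Or.inl h)
    · exact .move (Or.inr h)

end DoorSystem

structure Traversal (G : Gadget) where
  src : G.State × G.Loc
  tgt : G.State × G.Loc
  valid : G.trav src tgt

instance (G : Gadget) : Finite (Traversal G) :=
  Finite.of_injective (fun t : Traversal G => (t.src, t.tgt)) fun ⟨_, _, _⟩ ⟨_, _, _⟩ h => by
    cases h; rfl

inductive Door (G : Gadget)
  | hub (p : G.Loc)
  | state (z : G.State)
  | leave (t : Traversal G)
  | enter (t : Traversal G)

instance (G : Gadget) : Finite (Door G) :=
  Finite.of_surjective
    (Sum.elim Door.hub (Sum.elim Door.state (Sum.elim Door.leave Door.enter)) :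
      G.Loc ⊕ G.State ⊕ Traversal G ⊕ Traversal G → Door G)
    (by
      rintro (p | z | t | t)
      exacts [⟨.inl p, rfl⟩, ⟨.inr (.inl z), rfl⟩, ⟨.inr (.inr (.inl t)), rfl⟩,
        ⟨.inr (.inr (.inr t)), rfl⟩])

noncomputable instance (G : Gadget) : Fintype (Door G) := Fintype.ofFinite _

open Door

/-- The wires used by the route of a traversal, in the order of the route. The hub of a location
is the exit `C1` of a door that is never traversed: no tunnel of a directed door starts there. -/
inductive Wire (G : Gadget) : Door G × DoorLoc → Door G × DoorLoc → Prop
  | hub_leave (t : Traversal G) (p : G.Loc) (h : t.src.2 = p) : Wire G (hub p, C1) (leave t, O0)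
  | leave_enter (t : Traversal G) : Wire G (leave t, O1) (enter t, O0)
  | enter_state (t : Traversal G) (z : G.State) (h : t.src.1 = z) :
      Wire G (enter t, O1) (state z, T0)
  | state_state (z : G.State) : Wire G (state z, T1) (state z, C0)
  | state_leave (t : Traversal G) (z : G.State) (h : t.src.1 = z) :
      Wire G (state z, C1) (leave t, T0)
  | leave_leave (t : Traversal G) : Wire G (leave t, T1) (leave t, C0)
  | leave_state (t : Traversal G) (z : G.State) (h : t.tgt.1 = z) :
      Wire G (leave t, C1) (state z, O0)
  | state_enter (t : Traversal G) (z : G.State) (h : t.tgt.1 = z) :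
      Wire G (state z, O1) (enter t, T0)
  | enter_enter (t : Traversal G) : Wire G (enter t, T1) (enter t, C0)
  | enter_hub (t : Traversal G) (q : G.Loc) (h : t.tgt.2 = q) : Wire G (enter t, C1) (hub q, C1)

variable {G : Gadget}

open Classical in
/-- `none` means that no door of that kind is open; every configuration reachable from an encoded
state has a global state of this form. -/
noncomputable def globalState (s : Option G.State) (l e : Option (Traversal G)) : Door G → Bool
  | hub _ => false
  | state z => s = some z
  | leave t => l = some t
  | enter t => e = some t

@[simp] theorem globalState_state (s l e) (z : G.State) :
    globalState s l e (state z) = true ↔ s = some z := by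
  simp [globalState]

@[simp] theorem globalState_leave (s l e) (t : Traversal G) :
    globalState s l e (leave t) = true ↔ l = some t := by
  simp [globalState]

@[simp] theorem globalState_enter (s l e) (t : Traversal G) :
    globalState s l e (enter t) = true ↔ e = some t := by
  simp [globalState]

section Updates

variable (s : Option G.State) (l e : Option (Traversal G)) (z : G.State) (t : Traversal G)

theorem globalState_open_state :
    updState (globalState none l e) (state z) true = globalState (some z) l e := by
  classical
  funext d; cases d <;> simp [updState_eq_update, Function.update_apply, globalState, eq_comm]

theorem globalState_close_state :
    updState (globalState (some z) l e) (state z) false = globalState none l e := by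
  classical
  funext d; cases d <;> simp [updState_eq_update, Function.update_apply, globalState, eq_comm]

theorem globalState_open_leave :
    updState (globalState s none e) (leave t) true = globalState s (some t) e := by
  classical
  funext d; cases d <;> simp [updState_eq_update, Function.update_apply, globalState, eq_comm]

theorem globalState_close_leave :
    updState (globalState s (some t) e) (leave t) false = globalState s none e := by
  classical
  funext d; cases d <;> simp [updState_eq_update, Function.update_apply, globalState, eq_comm]

theorem globalState_open_enter :
    updState (globalState s l none) (enter t) true = globalState s l (some t) := by
  classical
  funext d; cases d <;> simp [updState_eq_update, Function.update_apply, globalState, eq_comm]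

theorem globalState_close_enter :
    updState (globalState s l (some t)) (enter t) false = globalState s l none := by
  classical
  funext d; cases d <;> simp [updState_eq_update, Function.update_apply, globalState, eq_comm]

end Updates

noncomputable abbrev encode (y : G.State) : Door G → Bool := globalState (some y) none none

theorem encode_injective : Function.Injective (encode (G := G)) := fun y y' h => by
  simpa [encode, globalState, eq_comm] using congrFun h (state y)

/-- An over-approximation of the configurations reachable from `(encode s, hub a)`: the agent is
at a hub, or on the route of a traversal `t` whose source is reachable from `(s, a)`. The
constructors mentioning a second traversal `t'` are the dead ends where the route of `t` meets a
port shared with `t'`. -/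
inductive Admissible (s : G.State) (a : G.Loc) : (Door G → Bool) × (Door G × DoorLoc) → Prop
  | idle (y : G.State) (p : G.Loc) (h : ReflTransGen G.trav (s, a) (y, p)) :
      Admissible s a (encode y, (hub p, C1))
  | enterC1 (t : Traversal G) (y : G.State) (h : ReflTransGen G.trav (s, a) (y, t.tgt.2)) :
      Admissible s a (encode y, (enter t, C1))
  | leaveO0 (t : Traversal G) (y : G.State) (h : ReflTransGen G.trav (s, a) (y, t.src.2)) :
      Admissible s a (encode y, (leave t, O0))
  | leaveO1 (t : Traversal G) (y : G.State) (h : ReflTransGen G.trav (s, a) (y, t.src.2)) :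
      Admissible s a (globalState (some y) (some t) none, (leave t, O1))
  | enterO0 (t : Traversal G) (y : G.State) (h : ReflTransGen G.trav (s, a) (y, t.src.2)) :
      Admissible s a (globalState (some y) (some t) none, (enter t, O0))
  | enterO1 (t t' : Traversal G) (y : G.State) (h : ReflTransGen G.trav (s, a) (y, t.src.2))
      (ht : t'.src.1 = t.src.1) :
      Admissible s a (globalState (some y) (some t) (some t), (enter t', O1))
  | stateT0 (t : Traversal G) (y : G.State) (h : ReflTransGen G.trav (s, a) (y, t.src.2)) :
      Admissible s a (globalState (some y) (some t) (some t), (state t.src.1, T0))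
  | stateT1 (t : Traversal G) (h : ReflTransGen G.trav (s, a) t.src) :
      Admissible s a (globalState (some t.src.1) (some t) (some t), (state t.src.1, T1))
  | stateC0 (t : Traversal G) (h : ReflTransGen G.trav (s, a) t.src) :
      Admissible s a (globalState (some t.src.1) (some t) (some t), (state t.src.1, C0))
  | stateC1 (t : Traversal G) (h : ReflTransGen G.trav (s, a) t.src) :
      Admissible s a (globalState none (some t) (some t), (state t.src.1, C1))
  | leaveT0 (t t' : Traversal G) (h : ReflTransGen G.trav (s, a) t.src)
      (ht : t'.src.1 = t.src.1) :
      Admissible s a (globalState none (some t) (some t), (leave t', T0))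
  | leaveT1 (t : Traversal G) (h : ReflTransGen G.trav (s, a) t.src) :
      Admissible s a (globalState none (some t) (some t), (leave t, T1))
  | leaveC0 (t : Traversal G) (h : ReflTransGen G.trav (s, a) t.src) :
      Admissible s a (globalState none (some t) (some t), (leave t, C0))
  | leaveC1 (t t' : Traversal G) (h : ReflTransGen G.trav (s, a) t.src)
      (ht : t'.tgt.1 = t.tgt.1) :
      Admissible s a (globalState none none (some t), (leave t', C1))
  | stateO0 (t : Traversal G) (h : ReflTransGen G.trav (s, a) t.src) :
      Admissible s a (globalState none none (some t), (state t.tgt.1, O0))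
  | stateO1 (t : Traversal G) (h : ReflTransGen G.trav (s, a) t.src) :
      Admissible s a (globalState (some t.tgt.1) none (some t), (state t.tgt.1, O1))
  | enterT0 (t t' : Traversal G) (h : ReflTransGen G.trav (s, a) t.src)
      (ht : t'.tgt.1 = t.tgt.1) :
      Admissible s a (globalState (some t.tgt.1) none (some t), (enter t', T0))
  | enterT1 (t : Traversal G) (h : ReflTransGen G.trav (s, a) t.src) :
      Admissible s a (globalState (some t.tgt.1) none (some t), (enter t, T1))
  | enterC0 (t : Traversal G) (h : ReflTransGen G.trav (s, a) t.src) :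
      Admissible s a (globalState (some t.tgt.1) none (some t), (enter t, C0))

namespace Admissible

variable {s : G.State} {a : G.Loc} {σ : Door G → Bool}

theorem opening {i : Door G} (hI : Admissible s a (σ, (i, O0))) :
    Admissible s a (updState σ i true, (i, O1)) := by
  cases hI with
  | leaveO0 t y h => rw [globalState_open_leave]; exact .leaveO1 t y h
  | enterO0 t y h => rw [globalState_open_enter]; exact .enterO1 t t y h rfl
  | stateO0 t h => rw [globalState_open_state]; exact .stateO1 t h

theorem traverse {i : Door G} (hI : Admissible s a (σ, (i, T0))) (hi : σ i = true) :
    Admissible s a (σ, (i, T1)) := by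
  cases hI with
  | stateT0 t y h =>
    obtain rfl : y = t.src.1 := by simpa using hi
    exact .stateT1 t h
  | leaveT0 t t' h =>
    obtain rfl : t = t' := by simpa using hi
    exact .leaveT1 t h
  | enterT0 t t' h =>
    obtain rfl : t = t' := by simpa using hi
    exact .enterT1 t h

theorem closing {i : Door G} (hI : Admissible s a (σ, (i, C0))) :
    Admissible s a (updState σ i false, (i, C1)) := by
  cases hI with
  | stateC0 t h => rw [globalState_close_state]; exact .stateC1 t h
  | leaveC0 t h => rw [globalState_close_leave]; exact .leaveC1 t t h rfl
  | enterC0 t h => rw [globalState_close_enter]; exact .enterC1 t t.tgt.1 (h.tail t.valid)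

theorem forward {x y : Door G × DoorLoc} (hI : Admissible s a (σ, x)) (hw : Wire G x y) :
    Admissible s a (σ, y) := by
  cases hw with
  | hub_leave t p hp => cases hI with | idle y _ h => exact .leaveO0 t y (hp ▸ h)
  | leave_enter t => cases hI with | leaveO1 _ y h => exact .enterO0 t y h
  | enter_state t' z hz => cases hI with | enterO1 t _ y h ht => exact hz ▸ ht ▸ .stateT0 t y h
  | state_state z => cases hI with | stateT1 t h => exact .stateC0 t h
  | state_leave t' z hz => cases hI with | stateC1 t h => exact .leaveT0 t t' h hz
  | leave_leave t => cases hI with | leaveT1 _ h => exact .leaveC0 t h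
  | leave_state t' z hz => cases hI with | leaveC1 t _ h ht => exact hz ▸ ht ▸ .stateO0 t h
  | state_enter t' z hz => cases hI with | stateO1 t h => exact .enterT0 t t' h hz
  | enter_enter t => cases hI with | enterT1 _ h => exact .enterC0 t h
  | enter_hub t q hq => cases hI with | enterC1 _ y h => exact .idle y q (hq ▸ h)

theorem backward {x y : Door G × DoorLoc} (hI : Admissible s a (σ, y)) (hw : Wire G x y) :
    Admissible s a (σ, x) := by
  cases hw with
  | hub_leave t p hp => cases hI with | leaveO0 _ y h => exact .idle y p (hp ▸ h)
  | leave_enter t => cases hI with | enterO0 _ y h => exact .leaveO1 t y h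
  | enter_state t' z hz => cases hI with | stateT0 t y h => exact .enterO1 t t' y h hz
  | state_state z => cases hI with | stateC0 t h => exact .stateT1 t h
  | state_leave t' z hz => cases hI with | leaveT0 t _ h ht => exact hz ▸ ht ▸ .stateC1 t h
  | leave_leave t => cases hI with | leaveC0 _ h => exact .leaveT1 t h
  | leave_state t' z hz => cases hI with | stateO0 t h => exact .leaveC1 t t' h hz
  | state_enter t' z hz => cases hI with | enterT0 t _ h ht => exact hz ▸ ht ▸ .stateO1 t h
  | enter_enter t => cases hI with | enterC0 _ h => exact .enterT1 t h
  | enter_hub t q hq => cases hI with | idle y _ h => exact .enterC1 t y (hq ▸ h)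

theorem step {c c' : (Door G → Bool) × (Door G × DoorLoc)} (hI : Admissible s a c)
    (hm : DoorMove (Wire G) c c') : Admissible s a c' := by
  cases hm with
  | opening => exact hI.opening
  | traverse hi => exact hI.traverse hi
  | closing => exact hI.closing
  | forward hw => exact hI.forward hw
  | backward hw => exact hI.backward hw

theorem of_reflTransGen {c : (Door G → Bool) × (Door G × DoorLoc)}
    (h : ReflTransGen (DoorMove (Wire G)) (encode s, (hub a, C1)) c) : Admissible s a c := by
  induction h with
  | refl => exact .idle s a .refl
  | tail _ hm ih => exact ih.step hm

theorem reflTransGen_of_hub {s' : G.State} {b : G.Loc}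
    (h : Admissible s a (encode s', (hub b, C1))) : ReflTransGen G.trav (s, a) (s', b) := by
  generalize hc : (encode s', (hub b, C1)) = c at h
  cases h
  case idle y p h =>
    obtain ⟨hy, ⟨⟩⟩ := Prod.mk.inj hc
    cases encode_injective hy
    exact h
  all_goals simp at hc

end Admissible

theorem reflTransGen_route (t : Traversal G) :
    ReflTransGen (DoorMove (Wire G))
      (encode t.src.1, (hub t.src.2, C1)) (encode t.tgt.1, (hub t.tgt.2, C1)) := by
  refine .head (.forward (.hub_leave t _ rfl)) ?_
  refine .head (.opening _ _) ?_
  rw [globalState_open_leave]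
  refine .head (.forward (.leave_enter t)) ?_
  refine .head (.opening _ _) ?_
  rw [globalState_open_enter]
  refine .head (.forward (.enter_state t _ rfl)) ?_
  refine .head (.traverse (by simp)) ?_
  refine .head (.forward (.state_state _)) ?_
  refine .head (.closing _ _) ?_
  rw [globalState_close_state]
  refine .head (.forward (.state_leave t _ rfl)) ?_
  refine .head (.traverse (by simp)) ?_
  refine .head (.forward (.leave_leave t)) ?_
  refine .head (.closing _ _) ?_
  rw [globalState_close_leave]
  refine .head (.forward (.leave_state t _ rfl)) ?_
  refine .head (.opening _ _) ?_
  rw [globalState_open_state]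
  refine .head (.forward (.state_enter t _ rfl)) ?_
  refine .head (.traverse (by simp)) ?_
  refine .head (.forward (.enter_enter t)) ?_
  refine .head (.closing _ _) ?_
  rw [globalState_close_enter]
  exact .single (.forward (.enter_hub t _ rfl))

theorem reflTransGen_doorMove_of_trav {s s' : G.State} {a b : G.Loc}
    (h : ReflTransGen G.trav (s, a) (s', b)) :
    ReflTransGen (DoorMove (Wire G)) (encode s, (hub a, C1)) (encode s', (hub b, C1)) :=
  ReflTransGen.lift' (fun x : G.State × G.Loc => (encode x.1, (hub x.2, C1)))
    (fun x y hxy => reflTransGen_route ⟨x, y, hxy⟩) _ _ h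

end DirectedDoor

/-- The open-required directed door can simulate any gadget. -/
theorem directed_door_is_universal (G : Gadget) :
    Simulates (doorGadget true true true) G := by
  open DirectedDoor in
  refine ⟨doorSystem (Wire G), fun p => (.hub p, DoorLoc.C1), encode,
    fun p q h => by cases h; rfl, encode_injective, fun s s' a b => ?_⟩
  rw [sysStep_doorSystem]
  exact ⟨fun h => (Admissible.of_reflTransGen h).reflTransGen_of_hub,
    reflTransGen_doorMove_of_trav⟩
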